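/- (Flatness of the risk curve at small regularization.) For any 0 ≤ δ ≤ δ′ for which positive solutions κ_δ, κ_{δ′} and κ_0 of the self-consistent equation exist, the risk estimates satisfy R̃_δ ≤ E_δ · R̃_{δ′} ≤ E_0 · R̃_{δ′}. In particular, the overfitting coefficient E_0 bounds the multiplicative cost of using any ridge parameter δ smaller than the optimal one. -/

import Mathlib

/-!
Write `L_i(κ) = λ_i / (λ_i + κ)`. The sum `∑ L_i(κ)` is strictly decreasing in `κ` while
`δ / κ` is nonincreasing in `κ` and nondecreasing in `δ`, so the self-consistent equation forces
`κ_0 ≤ κ_δ ≤ κ_δ'`. Every `L_i` and `L_i²` decreases in `κ`, hence `E` decreases and every bias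
factor `(1 - L_i)²` increases along this chain. Since `L_i² < L_i` for some `i`, we get
`∑ L_i² < ∑ L_i ≤ n`, so every `E` has a positive denominator and is `≥ 1`. Hence
`R̃_δ = E_δ (bias(κ_δ) + σ²) ≤ E_δ (bias(κ_δ') + σ²) ≤ E_δ R̃_δ'`, and `E_δ ≤ E_0`.
-/

noncomputable section

namespace RidgeRisk

variable {ι : Type*} {lam : ι → ℝ} {κ κ' : ℝ}

def learnability (lam : ι → ℝ) (κ : ℝ) (i : ι) : ℝ := lam i / (lam i + κ)

def overfittingCoeff (n : ℕ) (lam : ι → ℝ) (κ : ℝ) : ℝ :=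
  n / (n - ∑' i, learnability lam κ i ^ 2)

def omniscientRisk (n : ℕ) (lam v : ι → ℝ) (σ2 κ : ℝ) : ℝ :=
  overfittingCoeff n lam κ * (∑' i, (1 - learnability lam κ i) ^ 2 * v i ^ 2 + σ2)

def IsSelfConsistent (n : ℕ) (lam : ι → ℝ) (δ κ : ℝ) : Prop :=
  ∑' i, learnability lam κ i + δ / κ = n

section Learnability

variable (hlam : ∀ i, 0 ≤ lam i)
include hlam

lemma learnability_nonneg (hκ : 0 ≤ κ) (i : ι) : 0 ≤ learnability lam κ i :=
  div_nonneg (hlam i) (add_nonneg (hlam i) hκ)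

lemma learnability_lt_one (hκ : 0 < κ) (i : ι) : learnability lam κ i < 1 :=
  (div_lt_one (by linarith [hlam i])).2 (by linarith)

lemma learnability_antitone (hκ : 0 < κ) (hκκ' : κ ≤ κ') (i : ι) :
    learnability lam κ' i ≤ learnability lam κ i :=
  div_le_div_of_nonneg_left (hlam i) (by linarith [hlam i]) (by linarith)

lemma learnability_sq_le (hκ : 0 < κ) (i : ι) :
    learnability lam κ i ^ 2 ≤ learnability lam κ i :=
  pow_le_of_le_one (learnability_nonneg hlam hκ.le i) (learnability_lt_one hlam hκ i).le two_ne_zero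

lemma summable_learnability (hsum : Summable lam) (hκ : 0 < κ) :
    Summable (learnability lam κ) :=
  (hsum.div_const κ).of_nonneg_of_le (learnability_nonneg hlam hκ.le) fun i =>
    div_le_div_of_nonneg_left (hlam i) hκ (by linarith [hlam i])

lemma summable_learnability_sq (hsum : Summable lam) (hκ : 0 < κ) :
    Summable fun i => learnability lam κ i ^ 2 :=
  (summable_learnability hlam hsum hκ).of_nonneg_of_le (fun _ => sq_nonneg _)
    (learnability_sq_le hlam hκ)

lemma tsum_learnability_lt_of_lt (hsum : Summable lam) (hne : ∃ i, lam i ≠ 0)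
    (hκ : 0 < κ) (hκκ' : κ < κ') :
    ∑' i, learnability lam κ' i < ∑' i, learnability lam κ i := by
  obtain ⟨i₀, hi₀⟩ := hne
  have hpos : 0 < lam i₀ := (hlam i₀).lt_of_ne' hi₀
  exact (summable_learnability hlam hsum (hκ.trans hκκ')).tsum_lt_tsum
    (learnability_antitone hlam hκ hκκ'.le)
    (div_lt_div_of_pos_left hpos (by linarith) (by linarith))
    (summable_learnability hlam hsum hκ)

lemma tsum_learnability_sq_antitone (hsum : Summable lam) (hκ : 0 < κ) (hκκ' : κ ≤ κ') :
    ∑' i, learnability lam κ' i ^ 2 ≤ ∑' i, learnability lam κ i ^ 2 :=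
  (summable_learnability_sq hlam hsum (hκ.trans_le hκκ')).tsum_le_tsum
    (fun i => pow_le_pow_left₀ (learnability_nonneg hlam (by linarith) i)
      (learnability_antitone hlam hκ hκκ' i) 2)
    (summable_learnability_sq hlam hsum hκ)

lemma tsum_learnability_sq_lt (hsum : Summable lam) (hne : ∃ i, lam i ≠ 0) (hκ : 0 < κ) :
    ∑' i, learnability lam κ i ^ 2 < ∑' i, learnability lam κ i := by
  obtain ⟨i₀, hi₀⟩ := hne
  have hpos : 0 < learnability lam κ i₀ :=
    div_pos ((hlam i₀).lt_of_ne' hi₀) (by linarith [hlam i₀])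
  exact (summable_learnability_sq hlam hsum hκ).tsum_lt_tsum (learnability_sq_le hlam hκ)
    (pow_lt_self_of_lt_one₀ hpos (learnability_lt_one hlam hκ i₀) one_lt_two)
    (summable_learnability hlam hsum hκ)

lemma summable_bias (v : ι → ℝ) (hv : Summable fun i => v i ^ 2) (hκ : 0 < κ) :
    Summable fun i => (1 - learnability lam κ i) ^ 2 * v i ^ 2 := by
  refine hv.of_nonneg_of_le (fun i => by positivity) fun i => ?_
  have h₀ := learnability_nonneg hlam hκ.le i
  have h₁ := learnability_lt_one hlam hκ i
  exact mul_le_of_le_one_left (sq_nonneg _) (by nlinarith)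

lemma tsum_bias_monotone (v : ι → ℝ) (hv : Summable fun i => v i ^ 2) (hκ : 0 < κ)
    (hκκ' : κ ≤ κ') :
    ∑' i, (1 - learnability lam κ i) ^ 2 * v i ^ 2 ≤
      ∑' i, (1 - learnability lam κ' i) ^ 2 * v i ^ 2 :=
  (summable_bias hlam v hv hκ).tsum_le_tsum
    (fun i => mul_le_mul_of_nonneg_right
      (pow_le_pow_left₀ (by linarith [learnability_lt_one hlam hκ i])
        (by linarith [learnability_antitone hlam hκ hκκ' i]) 2) (sq_nonneg _))
    (summable_bias hlam v hv (hκ.trans_le hκκ'))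

end Learnability

section Overfitting

variable {n : ℕ}

lemma overfittingCoeff_nonneg (hS : ∑' i, learnability lam κ i ^ 2 < n) :
    0 ≤ overfittingCoeff n lam κ :=
  div_nonneg n.cast_nonneg (by linarith)

lemma one_le_overfittingCoeff (hS : ∑' i, learnability lam κ i ^ 2 < n) :
    1 ≤ overfittingCoeff n lam κ := by
  have : 0 ≤ ∑' i, learnability lam κ i ^ 2 := tsum_nonneg fun _ => sq_nonneg _
  exact (one_le_div (by linarith)).2 (by linarith)

lemma overfittingCoeff_antitone (hlam : ∀ i, 0 ≤ lam i) (hsum : Summable lam) (hκ : 0 < κ)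
    (hκκ' : κ ≤ κ') (hS : ∑' i, learnability lam κ i ^ 2 < n) :
    overfittingCoeff n lam κ' ≤ overfittingCoeff n lam κ :=
  div_le_div_of_nonneg_left n.cast_nonneg (by linarith)
    (by linarith [tsum_learnability_sq_antitone hlam hsum hκ hκκ'])

end Overfitting

section Risk

variable {n : ℕ} {v : ι → ℝ} {σ2 : ℝ}

lemma omniscientRisk_nonneg (hσ2 : 0 ≤ σ2)
    (hS : ∑' i, learnability lam κ i ^ 2 < n) :
    0 ≤ omniscientRisk n lam v σ2 κ :=
  mul_nonneg (overfittingCoeff_nonneg hS)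
    (add_nonneg (tsum_nonneg fun _ => by positivity) hσ2)

lemma bias_add_le_omniscientRisk (hσ2 : 0 ≤ σ2) (hS : ∑' i, learnability lam κ i ^ 2 < n) :
    ∑' i, (1 - learnability lam κ i) ^ 2 * v i ^ 2 + σ2 ≤ omniscientRisk n lam v σ2 κ :=
  le_mul_of_one_le_left (add_nonneg (tsum_nonneg fun _ => by positivity) hσ2)
    (one_le_overfittingCoeff hS)

end Risk

namespace IsSelfConsistent

variable {n : ℕ} {δ δ' : ℝ} (hlam : ∀ i, 0 ≤ lam i) (hsum : Summable lam)
  (hne : ∃ i, lam i ≠ 0)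
include hlam hsum hne

lemma le_of_le (h : IsSelfConsistent n lam δ κ) (h' : IsSelfConsistent n lam δ' κ')
    (hδ : 0 ≤ δ) (hδδ' : δ ≤ δ') (hκ' : 0 < κ') : κ ≤ κ' := by
  by_contra! hlt
  have hsum_lt := tsum_learnability_lt_of_lt hlam hsum hne hκ' hlt
  have hdiv : δ / κ ≤ δ' / κ' :=
    (div_le_div_of_nonneg_left hδ hκ' hlt.le).trans (div_le_div_of_nonneg_right hδδ' hκ'.le)
  unfold IsSelfConsistent at h h'
  linarith

lemma tsum_learnability_sq_lt_n (h : IsSelfConsistent n lam δ κ) (hδ : 0 ≤ δ) (hκ : 0 < κ) :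
    ∑' i, learnability lam κ i ^ 2 < n := by
  have := tsum_learnability_sq_lt hlam hsum hne hκ
  have : 0 ≤ δ / κ := div_nonneg hδ hκ.le
  unfold IsSelfConsistent at h
  linarith

end IsSelfConsistent

end RidgeRisk

end

open RidgeRisk in
theorem flatness_of_risk_curve_general
    (n : ℕ)
    (lam : ℕ → ℝ) (hlam_nonneg : ∀ i, 0 ≤ lam i)
    (hlam_summable : Summable lam) (hlam_ne : ∃ i, lam i ≠ 0)
    (v : ℕ → ℝ) (hv : Summable fun i => v i ^ 2)
    (σ2 : ℝ) (hσ2 : 0 ≤ σ2)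
    (δ δ' : ℝ) (hδ : 0 ≤ δ) (hδδ' : δ ≤ δ')
    (κ0 κδ κδ' : ℝ) (hκ0_pos : 0 < κ0) (hκδ_pos : 0 < κδ) (hκδ'_pos : 0 < κδ')
    (hκ0_eq : ∑' i, lam i / (lam i + κ0) = (n : ℝ))
    (hκδ_eq : ∑' i, lam i / (lam i + κδ) + δ / κδ = (n : ℝ))
    (hκδ'_eq : ∑' i, lam i / (lam i + κδ') + δ' / κδ' = (n : ℝ))
    (E0 Eδ : ℝ)
    (hE0 : E0 = (n : ℝ) / ((n : ℝ) - ∑' i, (lam i / (lam i + κ0)) ^ 2))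
    (hEδ : Eδ = (n : ℝ) / ((n : ℝ) - ∑' i, (lam i / (lam i + κδ)) ^ 2))
    (Eδ' : ℝ)
    (hEδ' : Eδ' = (n : ℝ) / ((n : ℝ) - ∑' i, (lam i / (lam i + κδ')) ^ 2))
    (Rtδ Rtδ' : ℝ)
    (hRtδ : Rtδ = Eδ * (∑' i, (1 - lam i / (lam i + κδ)) ^ 2 * v i ^ 2 + σ2))
    (hRtδ' : Rtδ' = Eδ' * (∑' i, (1 - lam i / (lam i + κδ')) ^ 2 * v i ^ 2 + σ2)) :
    Rtδ ≤ Eδ * Rtδ' ∧ Eδ * Rtδ' ≤ E0 * Rtδ' := by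
  subst hE0 hEδ hEδ' hRtδ hRtδ'
  have h0 : IsSelfConsistent n lam 0 κ0 := by
    rw [IsSelfConsistent, zero_div, add_zero]; exact hκ0_eq
  have hδ_sc : IsSelfConsistent n lam δ κδ := hκδ_eq
  have hδ'_sc : IsSelfConsistent n lam δ' κδ' := hκδ'_eq
  have hκ0δ : κ0 ≤ κδ := h0.le_of_le hlam_nonneg hlam_summable hlam_ne hδ_sc le_rfl hδ hκδ_pos
  have hκδδ' : κδ ≤ κδ' :=
    hδ_sc.le_of_le hlam_nonneg hlam_summable hlam_ne hδ'_sc hδ hδδ' hκδ'_pos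
  have hS0 := h0.tsum_learnability_sq_lt_n hlam_nonneg hlam_summable hlam_ne le_rfl hκ0_pos
  have hSδ := hδ_sc.tsum_learnability_sq_lt_n hlam_nonneg hlam_summable hlam_ne hδ hκδ_pos
  have hSδ' := hδ'_sc.tsum_learnability_sq_lt_n hlam_nonneg hlam_summable hlam_ne
    (hδ.trans hδδ') hκδ'_pos
  have hbias : ∑' i, (1 - learnability lam κδ i) ^ 2 * v i ^ 2 + σ2 ≤
      omniscientRisk n lam v σ2 κδ' :=
    (add_le_add_left (tsum_bias_monotone hlam_nonneg v hv hκδ_pos hκδδ') σ2).trans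
      (bias_add_le_omniscientRisk hσ2 hSδ')
  exact ⟨mul_le_mul_of_nonneg_left hbias (overfittingCoeff_nonneg hSδ),
    mul_le_mul_of_nonneg_right
      (overfittingCoeff_antitone hlam_nonneg hlam_summable hκ0_pos hκ0δ hS0)
      (omniscientRisk_nonneg hσ2 hSδ')⟩

/-- Flatness of the risk curve at small regularization:
For any `0 ≤ δ ≤ δ'` for which positive solutions `κ_δ`, `κ_{δ'}` and `κ_0`
of the self-consistent equation exist, `R̃_δ ≤ E_δ · R̃_{δ'} ≤ E_0 · R̃_{δ'}`. -/
theorem flatness_of_risk_curve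
    (n : ℕ) (hn : 1 ≤ n)
    (lam : ℕ → ℝ) (hlam_nonneg : ∀ i, 0 ≤ lam i) (hlam_mono : Antitone lam)
    (hlam_summable : Summable lam) (hlam_ne : ∃ i, lam i ≠ 0)
    (v : ℕ → ℝ) (hv : Summable fun i => v i ^ 2)
    (σ2 : ℝ) (hσ2 : 0 ≤ σ2)
    (δ δ' : ℝ) (hδ : 0 ≤ δ) (hδδ' : δ ≤ δ')
    (κ0 κδ κδ' : ℝ) (hκ0_pos : 0 < κ0) (hκδ_pos : 0 < κδ) (hκδ'_pos : 0 < κδ')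
    (hκ0_eq : ∑' i, lam i / (lam i + κ0) = (n : ℝ))
    (hκδ_eq : ∑' i, lam i / (lam i + κδ) + δ / κδ = (n : ℝ))
    (hκδ'_eq : ∑' i, lam i / (lam i + κδ') + δ' / κδ' = (n : ℝ))
    (E0 Eδ : ℝ)
    (hE0 : E0 = (n : ℝ) / ((n : ℝ) - ∑' i, (lam i / (lam i + κ0)) ^ 2))
    (hEδ : Eδ = (n : ℝ) / ((n : ℝ) - ∑' i, (lam i / (lam i + κδ)) ^ 2))
    (Eδ' : ℝ)
    (hEδ' : Eδ' = (n : ℝ) / ((n : ℝ) - ∑' i, (lam i / (lam i + κδ')) ^ 2))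
    (Rtδ Rtδ' : ℝ)
    (hRtδ : Rtδ = Eδ * (∑' i, (1 - lam i / (lam i + κδ)) ^ 2 * v i ^ 2 + σ2))
    (hRtδ' : Rtδ' = Eδ' * (∑' i, (1 - lam i / (lam i + κδ')) ^ 2 * v i ^ 2 + σ2)) :
    Rtδ ≤ Eδ * Rtδ' ∧ Eδ * Rtδ' ≤ E0 * Rtδ' :=
  flatness_of_risk_curve_general n lam hlam_nonneg hlam_summable hlam_ne v hv σ2 hσ2 δ δ' hδ hδδ' κ0
    κδ κδ' hκ0_pos hκδ_pos hκδ'_pos hκ0_eq hκδ_eq hκδ'_eq E0 Eδ hE0 hEδ Eδ' hEδ' Rtδ Rtδ' hRtδ hRtδ'
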